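/- arXiv:2001.06837 — 3 statements merged into one kernel-verified Lean document; each statement's English description precedes it below -/
import Mathlib

section
/- Let m ≡ m₀ with m₀ > 0 constant. For every ξ ∈ ℝⁿ the two eigenvalues η₁(ξ), η₂(ξ) of the monodromy matrix M₀(0,ξ) satisfy η₁(ξ)·η₂(ξ) = e^{−2βT}, and exactly one of the following holds: either both eigenvalues are real (so η₂(ξ) = η₁(ξ)⁻¹e^{−2βT}), or they form a complex-conjugate pair with |η₁(ξ)| = |η₂(ξ)| = e^{−βT}. -/
noncomputable section
open MeasureTheory Matrix Complex Polynomial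
open scoped Matrix.Norms.L2Operator ComplexConjugate

abbrev Mat2 := Matrix (Fin 2) (Fin 2) ℂ

def Dmat : Mat2 := !![1,0;0,-1]

def conjFlipLM : Mat2 →ₗ[ℝ] Mat2 where
  toFun M := Dmat * M.map (starRingEnd ℂ) * Dmat
  map_add' M N := by
    have h : (M + N).map (starRingEnd ℂ) = M.map (starRingEnd ℂ) + N.map (starRingEnd ℂ) := by
      ext i j; simp [Matrix.map_apply]
    rw [h, mul_add, add_mul]
  map_smul' r M := by
    have h : ((r • M)).map (starRingEnd ℂ) = r • M.map (starRingEnd ℂ) := by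
      ext i j; simp [Matrix.map_apply, Complex.real_smul, _root_.map_mul, Complex.conj_ofReal]
    rw [h]; simp [mul_smul_comm, smul_mul_assoc]

def conjFlipCLM : Mat2 →L[ℝ] Mat2 := conjFlipLM.toContinuousLinearMap

def entryCLM (i j : Fin 2) : Mat2 →L[ℝ] ℂ :=
  LinearMap.toContinuousLinearMap
    { toFun := fun M => M i j
      map_add' := fun _ _ => rfl
      map_smul' := fun _ _ => rfl }

lemma charpoly_fin_two' (M : Mat2) :
    M.charpoly = X ^ 2 - C M.trace * X + C M.det := by
  rw [Matrix.charpoly, Matrix.det_fin_two]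
  simp [Matrix.charmatrix_apply, Matrix.trace_fin_two, Matrix.det_fin_two]
  ring

lemma conjFlip_one : conjFlipLM (1 : Mat2) = 1 := by
  show Dmat * (1 : Mat2).map (starRingEnd ℂ) * Dmat = 1
  ext i j
  fin_cases i <;> fin_cases j <;>
    simp [Dmat, Matrix.mul_apply, Fin.sum_univ_two, Matrix.map_apply, Matrix.one_apply]

lemma conjFlip_key (a c : ℝ) (M : Mat2) :
    conjFlipLM (Complex.I • (!![0,(a:ℂ);(a:ℂ),2*Complex.I*(c:ℂ)] * M)) =
    Complex.I • (!![0,(a:ℂ);(a:ℂ),2*Complex.I*(c:ℂ)] * (conjFlipLM M)) := by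
  show Dmat * (Complex.I • (_ * M)).map (starRingEnd ℂ) * Dmat
      = Complex.I • (_ * (Dmat * M.map (starRingEnd ℂ) * Dmat))
  ext i j
  fin_cases i <;> fin_cases j <;>
    simp [Dmat, Matrix.mul_apply, Matrix.vecMul, dotProduct, Fin.sum_univ_two,
      Matrix.map_apply, Matrix.smul_apply,
      map_add, _root_.map_mul, map_ofNat, Complex.conj_ofReal, Complex.conj_I] <;> ring

lemma sys_decomp (a c : ℝ) :
    (!![0,(a:ℂ);(a:ℂ),2*Complex.I*(c:ℂ)] : Mat2)
      = (a:ℂ) • (!![0,1;1,0] : Mat2) + (c:ℂ) • (!![0,0;0,2*Complex.I] : Mat2) := by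
  ext i j
  fin_cases i <;> fin_cases j <;> simp <;> ring

lemma conjFlip_apply_00 (M : Mat2) : conjFlipLM M 0 0 = (starRingEnd ℂ) (M 0 0) := by
  show (Dmat * M.map (starRingEnd ℂ) * Dmat) 0 0 = _
  simp [Dmat, Matrix.mul_apply, Matrix.vecMul, dotProduct, Fin.sum_univ_two,
    Matrix.map_apply]

lemma conjFlip_apply_11 (M : Mat2) : conjFlipLM M 1 1 = (starRingEnd ℂ) (M 1 1) := by
  show (Dmat * M.map (starRingEnd ℂ) * Dmat) 1 1 = _
  simp [Dmat, Matrix.mul_apply, Matrix.vecMul, dotProduct, Fin.sum_univ_two,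
    Matrix.map_apply]

/-- The coefficient matrix `A₀(t,ξ) = [[0, ⟨ξ⟩_{m₀}], [⟨ξ⟩_{m₀}, 2ib(t)]]` with
constant mass, `⟨ξ⟩_{m₀} = √(|ξ|² + m₀²)`. -/
def sysMatrix {n : ℕ} (b : ℝ → ℝ) (m₀ : ℝ) (t : ℝ) (ξ : EuclideanSpace ℝ (Fin n)) :
    Matrix (Fin 2) (Fin 2) ℂ :=
  !![0, (Real.sqrt (‖ξ‖ ^ 2 + m₀ ^ 2) : ℂ);
     (Real.sqrt (‖ξ‖ ^ 2 + m₀ ^ 2) : ℂ), 2 * Complex.I * (b t : ℂ)]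

/-- `E` is the fundamental solution: `∂ₜ E(t,s,ξ) = i A₀(t,ξ) E(t,s,ξ)`, `E(s,s,ξ) = I`. -/
def IsFundamentalSolution {n : ℕ} (b : ℝ → ℝ) (m₀ : ℝ)
    (E : ℝ → ℝ → EuclideanSpace ℝ (Fin n) → Matrix (Fin 2) (Fin 2) ℂ) : Prop :=
  (∀ s ξ t, HasDerivAt (fun τ => E τ s ξ)
      (Complex.I • (sysMatrix b m₀ t ξ * E t s ξ)) t) ∧ ∀ s ξ, E s s ξ = 1

/-- For constant mass `m₀ > 0`, the two eigenvalues `η₁(ξ), η₂(ξ)` of the monodromy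
matrix `M₀(0,ξ) = E₀(T,0,ξ)` satisfy `η₁ η₂ = e^{-2βT}`, and either both are real
(then `η₂ = η₁⁻¹ e^{-2βT}`) or they form a genuinely complex conjugate pair with
`|η₁| = |η₂| = e^{-βT}`. -/
theorem monodromy_eigenvalues_dichotomy
    {n : ℕ} (T : ℝ) (hT : 0 < T)
    (b : ℝ → ℝ) (hb_cont : Continuous b) (hb_nonneg : ∀ t, 0 ≤ b t)
    (hb_per : Function.Periodic b T) (hb_ne : ∃ t, b t ≠ 0)
    (β : ℝ) (hβ : β = (1 / T) * ∫ τ in (0:ℝ)..T, b τ) (hβ_pos : 0 < β)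
    (m₀ : ℝ) (hm₀ : 0 < m₀)
    (E : ℝ → ℝ → EuclideanSpace ℝ (Fin n) → Matrix (Fin 2) (Fin 2) ℂ)
    (hE : IsFundamentalSolution b m₀ E) :
    ∀ ξ : EuclideanSpace ℝ (Fin n), ∃ η₁ η₂ : ℂ,
      (E (0 + T) 0 ξ).charpoly = (X - C η₁) * (X - C η₂) ∧
      η₁ * η₂ = (Real.exp (-2 * β * T) : ℂ) ∧
      ((η₁.im = 0 ∧ η₂.im = 0 ∧ η₂ = η₁⁻¹ * (Real.exp (-2 * β * T) : ℂ)) ∨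
       (η₁.im ≠ 0 ∧ η₂ = conj η₁ ∧
         ‖η₁‖ = Real.exp (-β * T) ∧ ‖η₂‖ = Real.exp (-β * T))) := by
  obtain ⟨hD, hI⟩ := hE
  obtain ⟨Cb, hCb⟩ : ∃ C : ℝ, ∀ t, |b t| ≤ C := by
    obtain ⟨C, hC⟩ := (isCompact_Icc (a := (0:ℝ)) (b := T)).exists_bound_of_continuousOn
      hb_cont.continuousOn
    exact ⟨C, fun t => by
      obtain ⟨y, hy, hty⟩ := hb_per.exists_mem_Ico₀ hT t
      rw [hty]; simpa using hC y (Set.Ico_subset_Icc_self hy)⟩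
  intro ξ
  set a : ℝ := Real.sqrt (‖ξ‖ ^ 2 + m₀ ^ 2) with ha
  set A : ℝ → Mat2 := fun t => sysMatrix b m₀ t ξ with hA
  have hAeq : ∀ t, A t = !![0,(a:ℂ);(a:ℂ),2*Complex.I*((b t):ℂ)] := fun t => rfl
  set Em : ℝ → Mat2 := fun t => E t 0 ξ with hEm
  have hD' : ∀ t, HasDerivAt Em (Complex.I • (A t * Em t)) t := fun t => hD 0 ξ t
  have hCb0 : (0:ℝ) ≤ Cb := le_trans (abs_nonneg _) (hCb 0)
  set P : Mat2 := !![0,1;1,0] with hP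
  set Q : Mat2 := !![0,0;0,2*Complex.I] with hQ
  set K0 : ℝ := a * ‖P‖ + Cb * ‖Q‖ with hK0def
  have hK0nn : 0 ≤ K0 :=
    add_nonneg (mul_nonneg (Real.sqrt_nonneg _) (norm_nonneg _))
      (mul_nonneg hCb0 (norm_nonneg _))
  have hAle : ∀ t, ‖A t‖ ≤ K0 := by
    intro t
    rw [hAeq t, sys_decomp]
    refine le_trans (norm_add_le _ _) (add_le_add ?_ ?_)
    · rw [norm_smul, Complex.norm_real, Real.norm_eq_abs,
        _root_.abs_of_nonneg (ha ▸ Real.sqrt_nonneg _ : (0:ℝ) ≤ a), hP]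
    · rw [norm_smul, Complex.norm_real, Real.norm_eq_abs]
      exact mul_le_mul_of_nonneg_right (hCb t) (norm_nonneg _)
  set v : ℝ → Mat2 → Mat2 := fun t M => Complex.I • (A t * M) with hv
  have hlip : ∀ t, LipschitzWith K0.toNNReal (v t) := by
    intro t
    refine LipschitzWith.of_dist_le_mul fun M N => ?_
    rw [dist_eq_norm, dist_eq_norm]
    have hsub : v t M - v t N = Complex.I • (A t * (M - N)) := by
      simp [hv, mul_sub, smul_sub]
    rw [hsub, norm_smul, Complex.norm_I, one_mul, Real.coe_toNNReal _ hK0nn]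
    calc ‖A t * (M - N)‖ ≤ ‖A t‖ * ‖M - N‖ := norm_mul_le _ _
      _ ≤ K0 * ‖M - N‖ := mul_le_mul_of_nonneg_right (hAle t) (norm_nonneg _)
  have hg' : ∀ t, HasDerivAt (fun τ => conjFlipCLM (Em τ)) (v t (conjFlipCLM (Em t))) t := by
    intro t
    have h1 := conjFlipCLM.hasFDerivAt.comp_hasDerivAt t (hD' t)
    have h2 : conjFlipCLM (Complex.I • (A t * Em t)) = v t (conjFlipCLM (Em t)) := by
      show conjFlipLM (Complex.I • (A t * Em t)) = Complex.I • (A t * conjFlipLM (Em t))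
      rw [hAeq t]
      exact conjFlip_key a (b t) (Em t)
    rwa [h2] at h1
  have hEm0 : Em 0 = 1 := hI 0 ξ
  have heqT : Em T = conjFlipCLM (Em T) := by
    have huniq := ODE_solution_unique_of_mem_Icc_right
      (v := v) (s := fun _ => Set.univ) (K := K0.toNNReal)
      (f := Em) (g := fun τ => conjFlipCLM (Em τ)) (a := 0) (b := T)
      (fun t _ => (hlip t).lipschitzOnWith)
      (fun t _ => (hD' t).continuousAt.continuousWithinAt)
      (fun t _ => (hD' t).hasDerivWithinAt)
      (fun t _ => trivial)
      (fun t _ => (hg' t).continuousAt.continuousWithinAt)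
      (fun t _ => (hg' t).hasDerivWithinAt)
      (fun t _ => trivial)
      (by show Em 0 = conjFlipCLM (Em 0)
          rw [hEm0]
          exact (conjFlip_one).symm)
    exact huniq ⟨hT.le, le_rfl⟩
  have h00 : ((Em T) 0 0).im = 0 := by
    have h := congrFun (congrFun heqT 0) 0
    rw [show conjFlipCLM (Em T) 0 0 = conjFlipLM (Em T) 0 0 from rfl,
      conjFlip_apply_00] at h
    have := Complex.conj_eq_iff_im.mp h.symm
    exact this
  have h11 : ((Em T) 1 1).im = 0 := by
    have h := congrFun (congrFun heqT 1) 1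
    rw [show conjFlipCLM (Em T) 1 1 = conjFlipLM (Em T) 1 1 from rfl,
      conjFlip_apply_11] at h
    exact Complex.conj_eq_iff_im.mp h.symm
  have htr_im : ((Em T).trace).im = 0 := by
    rw [Matrix.trace_fin_two]
    simp [Complex.add_im, h00, h11]
  have hent : ∀ (i j : Fin 2) (t : ℝ),
      HasDerivAt (fun τ => Em τ i j) ((Complex.I • (A t * Em t)) i j) t :=
    fun i j t => (entryCLM i j).hasFDerivAt.comp_hasDerivAt t (hD' t)
  have hdet : ∀ t, HasDerivAt (fun τ => (Em τ).det) ((-2*((b t):ℂ)) * (Em t).det) t := by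
    intro t
    have h : HasDerivAt (fun τ => Em τ 0 0 * Em τ 1 1 - Em τ 0 1 * Em τ 1 0) _ t :=
      ((hent 0 0 t).mul (hent 1 1 t)).sub ((hent 0 1 t).mul (hent 1 0 t))
    have hfun : (fun τ => Em τ 0 0 * Em τ 1 1 - Em τ 0 1 * Em τ 1 0)
        = fun τ => (Em τ).det := by
      funext τ; rw [Matrix.det_fin_two]
    rw [hfun] at h
    convert h using 1
    rw [Matrix.det_fin_two, hAeq t]
    simp [Matrix.smul_apply, Matrix.mul_apply, Matrix.vecMul, dotProduct,
      Fin.sum_univ_two]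
    ring_nf
    simp only [Complex.I_sq]
    ring
  set B : ℝ → ℝ := fun t => ∫ τ in (0:ℝ)..t, b τ with hBdef
  have hB : ∀ t : ℝ, HasDerivAt B (b t) t := fun t =>
    intervalIntegral.integral_hasDerivAt_right (hb_cont.intervalIntegrable _ _)
      (hb_cont.stronglyMeasurableAtFilter _ _) hb_cont.continuousAt
  have hzero : ∀ t : ℝ,
      HasDerivAt (fun τ => (Em τ).det * Complex.exp (((2 * B τ : ℝ) : ℂ))) 0 t := by
    intro t
    have he := (((hB t).const_mul 2).ofReal_comp).cexp
    have h : HasDerivAt (fun τ => (Em τ).det * Complex.exp (((2 * B τ : ℝ) : ℂ))) _ t :=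
      (hdet t).mul he
    convert h using 1
    push_cast
    ring
  have hconst := fun (x y : ℝ) => is_const_of_deriv_eq_zero
    (fun t => (hzero t).differentiableAt) (fun t => (hzero t).deriv) x y
  have hBT : B T = β * T := by
    rw [hβ]; field_simp; rfl
  have hB0 : B 0 = 0 := intervalIntegral.integral_same
  have hdetT : (Em T).det = ((Real.exp (-2*β*T)):ℂ) := by
    have h := hconst T 0
    rw [hEm0, hB0, Matrix.det_one] at h
    simp only [mul_zero, Complex.ofReal_zero, Complex.exp_zero, one_mul] at h
    have h2 : (Em T).det = (Complex.exp (((2 * B T : ℝ) : ℂ)))⁻¹ :=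
      eq_inv_of_mul_eq_one_left h
    rw [h2, ← Complex.exp_neg, Complex.ofReal_exp]
    congr 1
    rw [hBT]
    push_cast
    ring
  have hMrw : E (0 + T) 0 ξ = Em T := by rw [hEm, zero_add]
  set τr : ℝ := ((Em T).trace).re with hτr
  have htrace : (Em T).trace = ((τr : ℝ) : ℂ) := by
    apply Complex.ext
    · simp [hτr]
    · simp [htr_im]
  set δ : ℝ := Real.exp (-2*β*T) with hδ
  have hδpos : 0 < δ := Real.exp_pos _
  have hchar : (Em T).charpoly = X^2 - C ((τr:ℝ):ℂ) * X + C ((δ:ℝ):ℂ) := by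
    rw [charpoly_fin_two', htrace, hdetT]
  have hgoalδ : ((Real.exp (-2 * β * T) : ℝ) : ℂ) = ((δ:ℝ):ℂ) := by rw [hδ]
  clear hdet hzero hconst hent hlip hg' hD' hD hI hAle hCb heqT hB hB0 hBT
  clear_value τr δ Em A v B P Q K0 a
  clear hAeq hEm0 h00 h11 htr_im hv hK0def hK0nn hP hQ ha hA hEm hBdef hCb0 hτr htrace hdetT hgoalδ
  by_cases hcase : 0 ≤ τr^2 - 4*δ
  · set s : ℝ := Real.sqrt (τr^2 - 4*δ) with hs
    have hs2 : s^2 = τr^2 - 4*δ := Real.sq_sqrt hcase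
    clear_value s
    have hpr : ((τr + s)/2) * ((τr - s)/2) = δ := by nlinarith [hs2]
    refine ⟨(((τr + s)/2 : ℝ):ℂ), (((τr - s)/2 : ℝ):ℂ), ?_, ?_, ?_⟩
    · rw [hMrw, hchar]
      have h1 : ((τr:ℝ):ℂ) = (((τr + s)/2:ℝ):ℂ) + (((τr - s)/2:ℝ):ℂ) := by
        push_cast; ring
      have h2 : ((δ:ℝ):ℂ) = (((τr + s)/2:ℝ):ℂ) * (((τr - s)/2:ℝ):ℂ) := by
        rw [← hpr]; push_cast; ring
      rw [h1, h2, map_add, _root_.map_mul]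
      ring
    · exact_mod_cast hpr
    · left
      refine ⟨Complex.ofReal_im _, Complex.ofReal_im _, ?_⟩
      have hne : (((τr + s)/2:ℝ):ℂ) ≠ 0 := by
        intro h0
        have h0' : ((τr + s)/2 : ℝ) = 0 := by exact_mod_cast h0
        rw [h0', zero_mul] at hpr
        linarith
      exact (eq_inv_mul_iff_mul_eq₀ hne).mpr (by exact_mod_cast hpr)
  · push_neg at hcase
    set s : ℝ := Real.sqrt (4*δ - τr^2) with hs
    have hs2 : s^2 = 4*δ - τr^2 := Real.sq_sqrt (by linarith)
    have hspos : 0 < s := Real.sqrt_pos.mpr (by linarith)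
    clear_value s
    set η₁ : ℂ := (((τr/2):ℝ):ℂ) + (((s/2):ℝ):ℂ) * Complex.I with hη
    have hre : η₁.re = τr/2 := by simp [hη]
    have him : η₁.im = s/2 := by simp [hη]
    have hnormSq : Complex.normSq η₁ = δ := by
      rw [Complex.normSq_apply, hre, him]; nlinarith [hs2]
    have hsum : η₁ + conj η₁ = ((τr:ℝ):ℂ) := by
      rw [Complex.add_conj, hre]; push_cast; ring
    have hprod : η₁ * conj η₁ = ((δ:ℝ):ℂ) := by
      rw [Complex.mul_conj, hnormSq]
    have hexp2 : δ = Real.exp (-β*T)^2 := by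
      rw [hδ, sq, ← Real.exp_add]; ring_nf
    have habs : ‖η₁‖ = Real.exp (-β*T) := by
      rw [Complex.norm_def, hnormSq, hexp2, Real.sqrt_sq (Real.exp_nonneg _)]
    refine ⟨η₁, conj η₁, ?_, hprod, Or.inr ⟨?_, rfl, habs, ?_⟩⟩
    · rw [hMrw, hchar, ← hsum, ← hprod, map_add, _root_.map_mul]
      ring
    · rw [him]; positivity
    · rw [Complex.norm_conj]; exact habs
end
end

section
/- Let m ≡ m₀ with m₀ > 0 constant. Then for every t ∈ ℝ and every ξ ∈ ℝⁿ the spectral radius of the monodromy matrix is strictly less than one: ρ(M₀(t,ξ)) < 1. In particular ±1 is not an eigenvalue of M₀(t,ξ) for any ξ. -/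
noncomputable section
open MeasureTheory Matrix Complex
open scoped Matrix.Norms.L2Operator

def mulVecCLM (v : Fin 2 → ℂ) : Matrix (Fin 2) (Fin 2) ℂ →L[ℝ] (Fin 2 → ℂ) :=
  LinearMap.toContinuousLinearMap
    (LinearMap.restrictScalars ℝ
      ({ toFun := fun M => M *ᵥ v
         map_add' := fun M N => Matrix.add_mulVec M N v
         map_smul' := fun c M => Matrix.smul_mulVec c M v } :
        Matrix (Fin 2) (Fin 2) ℂ →ₗ[ℂ] (Fin 2 → ℂ)))

@[simp] lemma mulVecCLM_apply (v : Fin 2 → ℂ) (M : Matrix (Fin 2) (Fin 2) ℂ) :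
    mulVecCLM v M = M *ᵥ v := rfl

set_option maxHeartbeats 1000000 in
lemma eig_norm_lt
    {n : ℕ} (T : ℝ) (hT : 0 < T)
    (b : ℝ → ℝ) (hb_cont : Continuous b) (hb_nonneg : ∀ t, 0 ≤ b t)
    (hb_per : Function.Periodic b T) (hb_ne : ∃ t, b t ≠ 0)
    (m₀ : ℝ) (hm₀ : 0 < m₀)
    (E : ℝ → ℝ → EuclideanSpace ℝ (Fin n) → Matrix (Fin 2) (Fin 2) ℂ)
    (hE : IsFundamentalSolution b m₀ E) (t : ℝ) (ξ : EuclideanSpace ℝ (Fin n)) :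
    ∀ μ ∈ spectrum ℂ (E (t + T) t ξ), ‖μ‖ < 1 := by
  intro μ hμ
  by_contra hcon
  push_neg at hcon
  set lam : ℝ := Real.sqrt (‖ξ‖ ^ 2 + m₀ ^ 2) with hlam_def
  have hlam : 0 < lam := Real.sqrt_pos.mpr (by positivity)
  -- eigenvector
  rw [← AlgEquiv.spectrum_eq (Matrix.toLinAlgEquiv' : Matrix (Fin 2) (Fin 2) ℂ ≃ₐ[ℂ]
      ((Fin 2 → ℂ) →ₗ[ℂ] (Fin 2 → ℂ)))] at hμ
  obtain ⟨v, hv⟩ := (Module.End.hasEigenvalue_iff_mem_spectrum.mpr hμ).exists_hasEigenvector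
  have hvne : v ≠ 0 := hv.2
  have hMv : (E (t + T) t ξ) *ᵥ v = μ • v := by
    have := hv.apply_eq_smul
    rwa [Matrix.toLinAlgEquiv'_apply] at this
  -- the solution with initial data v
  set y : ℝ → (Fin 2 → ℂ) := fun τ => (E τ t ξ) *ᵥ v with hy_def
  have hyd : ∀ τ, HasDerivAt y (Complex.I • (sysMatrix b m₀ τ ξ *ᵥ y τ)) τ := by
    intro τ
    have h := hE.1 t ξ τ
    have h2 := (mulVecCLM v).hasFDerivAt.comp_hasDerivAt τ h
    have e2 : mulVecCLM v (Complex.I • (sysMatrix b m₀ τ ξ * E τ t ξ))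
        = Complex.I • (sysMatrix b m₀ τ ξ *ᵥ y τ) := by
      rw [mulVecCLM_apply, Matrix.smul_mulVec, ← Matrix.mulVec_mulVec]
    rw [e2] at h2
    exact h2
  have hy0 : ∀ τ, HasDerivAt (fun u => y u 0)
      (Complex.I * ((lam : ℂ) * y τ 1)) τ := by
    intro τ
    have := hasDerivAt_pi.mp (hyd τ) 0
    refine this.congr_deriv ?_
    simp [sysMatrix, Matrix.mulVec, dotProduct, Fin.sum_univ_two, hlam_def]
  have hy1 : ∀ τ, HasDerivAt (fun u => y u 1)
      (Complex.I * ((lam : ℂ) * y τ 0 + 2 * Complex.I * (b τ : ℂ) * y τ 1)) τ := by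
    intro τ
    have := hasDerivAt_pi.mp (hyd τ) 1
    refine this.congr_deriv ?_
    simp [sysMatrix, Matrix.mulVec, dotProduct, Fin.sum_univ_two, hlam_def]
  -- the energy
  set N : ℝ → ℝ := fun τ => ‖y τ 0‖ ^ 2 + ‖y τ 1‖ ^ 2 with hN_def
  have hNd : ∀ τ, HasDerivAt N (-4 * b τ * ‖y τ 1‖ ^ 2) τ := by
    intro τ
    have i0 := (hy0 τ).inner (𝕜 := ℝ) (hy0 τ)
    have i1 := (hy1 τ).inner (𝕜 := ℝ) (hy1 τ)
    have hsum := i0.add i1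
    have efun : ((fun τ => (inner ℝ (y τ 0) (y τ 0) : ℝ)) + fun τ => inner ℝ (y τ 1) (y τ 1)) = N := by
      funext u
      simp [hN_def, real_inner_self_eq_norm_sq]
    rw [efun] at hsum
    refine hsum.congr_deriv ?_
    simp only [Complex.inner, _root_.map_mul, Complex.mul_re, Complex.mul_im, Complex.conj_re,
      Complex.conj_im, Complex.I_re, Complex.I_im, Complex.ofReal_re, Complex.ofReal_im,
      Complex.add_re, Complex.add_im, Complex.sq_norm, Complex.normSq_apply, Complex.re_ofNat, Complex.im_ofNat]
    ring
  -- N is antitone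
  have hmono : Antitone N := by
    apply antitone_of_deriv_nonpos
    · exact fun τ => (hNd τ).differentiableAt
    · intro τ
      rw [(hNd τ).deriv]
      have h1 : 0 ≤ 4 * b τ * ‖y τ 1‖ ^ 2 :=
        mul_nonneg (mul_nonneg (by norm_num) (hb_nonneg τ)) (sq_nonneg _)
      linarith
  -- boundary values
  have hyt : y t = v := by
    simp only [hy_def, hE.2 t ξ, Matrix.one_mulVec]
  have hyT : y (t + T) = μ • v := by
    simp only [hy_def, hMv]
  have hNt : N t = ‖v 0‖ ^ 2 + ‖v 1‖ ^ 2 := by simp [hN_def, hyt]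
  have hNT : N (t + T) = ‖μ‖ ^ 2 * N t := by
    simp [hN_def, hyT, hyt, norm_smul, mul_pow]; ring
  have hNt_pos : 0 < N t := by
    have key0 : v 0 ≠ 0 ∨ v 1 ≠ 0 := by
      by_contra hcc
      push_neg at hcc
      apply hvne
      funext i
      fin_cases i
      · simpa using hcc.1
      · simpa using hcc.2
    have h0 : (0:ℝ) ≤ ‖v 0‖ := norm_nonneg _
    have h1 : (0:ℝ) ≤ ‖v 1‖ := norm_nonneg _
    rw [hNt]
    rcases key0 with h | h
    · have := norm_pos_iff.mpr h; nlinarith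
    · have := norm_pos_iff.mpr h; nlinarith
  have heq : N (t + T) = N t := by
    have hle : N (t + T) ≤ N t := hmono (by linarith)
    have hge : N t ≤ N (t + T) := by
      rw [hNT]
      have h2 : (1:ℝ) ≤ ‖μ‖ ^ 2 := by nlinarith
      nlinarith [mul_le_mul_of_nonneg_right h2 hNt_pos.le]
    linarith
  have hconst : ∀ τ ∈ Set.Icc t (t + T), N τ = N t := by
    intro τ hτ
    have h1 : N τ ≤ N t := hmono hτ.1
    have h2 : N (t + T) ≤ N τ := hmono hτ.2
    linarith
  have hzero : ∀ τ ∈ Set.Ioo t (t + T), b τ * ‖y τ 1‖ ^ 2 = 0 := by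
    intro τ hτ
    have hloc : N =ᶠ[nhds τ] fun _ => N t := by
      filter_upwards [Ioo_mem_nhds hτ.1 hτ.2] with x hx
      exact hconst x (Set.Ioo_subset_Icc_self hx)
    have h0 : HasDerivAt N 0 τ :=
      (hasDerivAt_const τ (N t)).congr_of_eventuallyEq hloc
    have := (hNd τ).unique h0
    linarith
  -- find a subinterval of (t, t+T) where b is positive
  obtain ⟨t₀, ht₀⟩ := hb_ne
  have hbt₀ : 0 < b t₀ := lt_of_le_of_ne (hb_nonneg t₀) (Ne.symm ht₀)
  set k : ℤ := ⌊(t - t₀) / T⌋ + 1 with hk_def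
  set u : ℝ := t₀ + k * T with hu_def
  have hku1 : t < u := by
    have h1 : (t - t₀) / T < k := by
      rw [hk_def]; push_cast; exact Int.lt_floor_add_one _
    have := (div_lt_iff₀ hT).mp h1
    rw [hu_def]; linarith
  have hku2 : u ≤ t + T := by
    have h1 : ((k : ℝ) - 1) ≤ (t - t₀) / T := by
      rw [hk_def]; push_cast; simp only [add_sub_cancel_right]; exact Int.floor_le _
    have h2 : ((k : ℝ) - 1) * T ≤ t - t₀ := (le_div_iff₀ hT).mp h1
    rw [hu_def]; nlinarith
  have hbu : 0 < b u := by
    have : b (t₀ + (k : ℝ) * T) = b t₀ := (hb_per.int_mul k) t₀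
    rw [hu_def, this]; exact hbt₀
  -- a ball around u where b is positive
  have hUopen : IsOpen (b ⁻¹' Set.Ioi 0) := (isOpen_Ioi).preimage hb_cont
  obtain ⟨δ, hδpos, hδ⟩ := Metric.isOpen_iff.mp hUopen u hbu
  set c : ℝ := max t (u - δ) with hc_def
  have hcu : c < u := max_lt hku1 (by linarith)
  have hJsub : Set.Ioo c u ⊆ Set.Ioo t (t + T) := by
    intro x hx
    constructor
    · exact lt_of_le_of_lt (le_max_left _ _) hx.1
    · exact lt_of_lt_of_le hx.2 hku2
  have hbpos : ∀ x ∈ Set.Ioo c u, 0 < b x := by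
    intro x hx
    apply hδ
    rw [Metric.mem_ball, Real.dist_eq, abs_sub_lt_iff]
    have hxc : u - δ ≤ c := le_max_right _ _
    constructor <;> [linarith [hx.1, hx.2]; linarith [hx.1, hx.2, hxc]]
  have hy1zero : ∀ x ∈ Set.Ioo c u, y x 1 = 0 := by
    intro x hx
    have h := hzero x (hJsub hx)
    have hb' := hbpos x hx
    have : ‖y x 1‖ ^ 2 = 0 := by
      rcases mul_eq_zero.mp h with h' | h'
      · exact absurd h' hb'.ne'
      · exact h'
    have : ‖y x 1‖ = 0 := by nlinarith [norm_nonneg (y x 1)]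
    exact norm_eq_zero.mp this
  -- midpoint where the whole solution vanishes
  set t₃ : ℝ := (c + u) / 2 with ht₃_def
  have ht₃mem : t₃ ∈ Set.Ioo c u := ⟨by rw [ht₃_def]; linarith, by rw [ht₃_def]; linarith⟩
  have hy1t₃ : y t₃ 1 = 0 := hy1zero t₃ ht₃mem
  have hy0t₃ : y t₃ 0 = 0 := by
    have hloc : (fun τ => y τ 1) =ᶠ[nhds t₃] fun _ => (0 : ℂ) := by
      filter_upwards [Ioo_mem_nhds ht₃mem.1 ht₃mem.2] with x hx
      exact hy1zero x hx
    have h0 : HasDerivAt (fun τ => y τ 1) 0 t₃ :=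
      (hasDerivAt_const t₃ (0 : ℂ)).congr_of_eventuallyEq hloc
    have huniq := (hy1 t₃).unique h0
    rw [hy1t₃] at huniq
    have hlamne : ((lam : ℂ)) ≠ 0 := Complex.ofReal_ne_zero.mpr hlam.ne'
    have : Complex.I * ((lam : ℂ) * y t₃ 0) = 0 := by
      rw [← huniq]; ring
    rcases mul_eq_zero.mp this with h' | h'
    · exact absurd h' Complex.I_ne_zero
    · rcases mul_eq_zero.mp h' with h'' | h''
      · exact absurd h'' hlamne
      · exact h''
  have hyt₃ : y t₃ = 0 := by
    funext i
    fin_cases i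
    · simpa using hy0t₃
    · simpa using hy1t₃
  -- global bound on b
  obtain ⟨x₀, _, hx₀⟩ := isCompact_Icc.exists_isMaxOn (Set.nonempty_Icc.mpr (by linarith : (0:ℝ) ≤ T))
      hb_cont.continuousOn
  set B : ℝ := b x₀ with hB_def
  have hB : ∀ w : ℝ, b w ≤ B := by
    intro w
    obtain ⟨w', hw', hwe⟩ := hb_per.exists_mem_Ico₀ hT w
    rw [hwe]
    exact hx₀ ⟨hw'.1, hw'.2.le⟩
  have hBnn : (0:ℝ) ≤ B := le_trans (hb_nonneg 0) (hB 0)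
  set K : ℝ := lam + 2 * B with hK_def
  -- bound on the vector field
  have hbound : ∀ (w : ℝ) (z : Fin 2 → ℂ),
      ‖Complex.I • (sysMatrix b m₀ w ξ *ᵥ z)‖ ≤ K * ‖z‖ := by
    intro w z
    rw [norm_smul, Complex.norm_I, one_mul]
    have hz0 : ‖z 0‖ ≤ ‖z‖ := norm_le_pi_norm z 0
    have hz1 : ‖z 1‖ ≤ ‖z‖ := norm_le_pi_norm z 1
    have hKnn : 0 ≤ K * ‖z‖ := mul_nonneg (by rw [hK_def]; linarith) (norm_nonneg _)
    have case0 : ‖(sysMatrix b m₀ w ξ *ᵥ z) 0‖ ≤ K * ‖z‖ := by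
      have he : (sysMatrix b m₀ w ξ *ᵥ z) 0 = (lam : ℂ) * z 1 := by
        simp [sysMatrix, Matrix.mulVec, dotProduct, Fin.sum_univ_two, hlam_def]
      rw [he, norm_mul, Complex.norm_real, Real.norm_eq_abs, abs_of_pos hlam]
      nlinarith [norm_nonneg (z 1), hb_nonneg w, hB w]
    have case1 : ‖(sysMatrix b m₀ w ξ *ᵥ z) 1‖ ≤ K * ‖z‖ := by
      have he : (sysMatrix b m₀ w ξ *ᵥ z) 1
          = (lam : ℂ) * z 0 + 2 * Complex.I * (b w : ℂ) * z 1 := by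
        simp [sysMatrix, Matrix.mulVec, dotProduct, Fin.sum_univ_two, hlam_def]
      rw [he]
      have h1 : ‖(lam : ℂ) * z 0 + 2 * Complex.I * (b w : ℂ) * z 1‖
          ≤ ‖(lam : ℂ) * z 0‖ + ‖2 * Complex.I * (b w : ℂ) * z 1‖ := norm_add_le _ _
      have h2 : ‖(lam : ℂ) * z 0‖ = lam * ‖z 0‖ := by
        rw [norm_mul, Complex.norm_real, Real.norm_eq_abs, abs_of_pos hlam]
      have h3 : ‖2 * Complex.I * (b w : ℂ) * z 1‖ = 2 * b w * ‖z 1‖ := by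
        rw [norm_mul, norm_mul, norm_mul, Complex.norm_I, Complex.norm_real, Real.norm_eq_abs,
          _root_.abs_of_nonneg (hb_nonneg w)]
        norm_num
      rw [h2, h3] at h1
      have h4 : lam * ‖z 0‖ + 2 * b w * ‖z 1‖ ≤ K * ‖z‖ := by
        rw [hK_def]
        nlinarith [norm_nonneg (z 1), hb_nonneg w, hB w, norm_nonneg z]
      linarith
    apply (pi_norm_le_iff_of_nonneg hKnn).mpr
    intro i
    fin_cases i
    · simpa using case0
    · simpa using case1
  -- Gronwall backwards from t₃ to t: the solution is zero at time t
  set z : ℝ → (Fin 2 → ℂ) := fun τ => y (t₃ - τ) with hz_def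
  set z' : ℝ → (Fin 2 → ℂ) :=
    fun τ => (-1 : ℝ) • (Complex.I • (sysMatrix b m₀ (t₃ - τ) ξ *ᵥ y (t₃ - τ))) with hz'_def
  have hzd : ∀ τ, HasDerivAt z (z' τ) τ := by
    intro τ
    have hg : HasDerivAt (fun x : ℝ => t₃ - x) (-1 : ℝ) τ := by
      simpa using (hasDerivAt_id τ).const_sub t₃
    exact HasDerivAt.scomp (𝕜 := ℝ) (𝕜' := ℝ) (F := Fin 2 → ℂ) (g₁ := y) (h := fun x => t₃ - x) (x := τ) (hg := hyd (t₃ - τ)) (hh := hg)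
  have ht₃t : t < t₃ := (hJsub ht₃mem).1
  have hzc : ContinuousOn z (Set.Icc 0 (t₃ - t)) :=
    fun τ _ => (hzd τ).continuousAt.continuousWithinAt
  have hzdw : ∀ x ∈ Set.Ico 0 (t₃ - t), HasDerivWithinAt z (z' x) (Set.Ici x) x :=
    fun x _ => (hzd x).hasDerivWithinAt
  have hza : ‖z 0‖ ≤ 0 := by
    have : z 0 = y t₃ := by rw [hz_def]; simp
    rw [this, hyt₃, norm_zero]
  have hbnd : ∀ x ∈ Set.Ico 0 (t₃ - t), ‖z' x‖ ≤ K * ‖z x‖ + 0 := by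
    intro x _
    have h1 : ‖z' x‖ = ‖Complex.I • (sysMatrix b m₀ (t₃ - x) ξ *ᵥ y (t₃ - x))‖ := by
      rw [hz'_def]; simp only [neg_smul, one_smul, norm_neg]
    have h2 : z x = y (t₃ - x) := by rw [hz_def]
    rw [h1, h2, add_zero]
    exact hbound (t₃ - x) (y (t₃ - x))
  have hgron := norm_le_gronwallBound_of_norm_deriv_right_le hzc hzdw hza hbnd
    (t₃ - t) (Set.mem_Icc.mpr ⟨by linarith, le_refl _⟩)
  rw [sub_zero, gronwallBound_ε0_δ0] at hgron
  have hzv : z (t₃ - t) = v := by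
    rw [hz_def]; simp only [sub_sub_cancel]; exact hyt
  rw [hzv] at hgron
  exact hvne (norm_le_zero_iff.mp hgron)



/-- For constant mass `m₀ > 0`, the spectral radius of the monodromy matrix
`M₀(t,ξ) = E₀(t+T,t,ξ)` is strictly less than one; in particular `±1` are not
eigenvalues. -/
theorem monodromy_spectral_radius_lt_one
    {n : ℕ} (T : ℝ) (hT : 0 < T)
    (b : ℝ → ℝ) (hb_cont : Continuous b) (hb_nonneg : ∀ t, 0 ≤ b t)
    (hb_per : Function.Periodic b T) (hb_ne : ∃ t, b t ≠ 0)
    (m₀ : ℝ) (hm₀ : 0 < m₀)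
    (E : ℝ → ℝ → EuclideanSpace ℝ (Fin n) → Matrix (Fin 2) (Fin 2) ℂ)
    (hE : IsFundamentalSolution b m₀ E) :
    ∀ (t : ℝ) (ξ : EuclideanSpace ℝ (Fin n)),
      spectralRadius ℂ (E (t + T) t ξ) < 1 ∧
      (1 : ℂ) ∉ spectrum ℂ (E (t + T) t ξ) ∧
      (-1 : ℂ) ∉ spectrum ℂ (E (t + T) t ξ) := by
  intro t ξ
  have key := eig_norm_lt T hT b hb_cont hb_nonneg hb_per hb_ne m₀ hm₀ E hE t ξ
  have hfin : (spectrum ℂ (E (t + T) t ξ)).Finite := Matrix.finite_spectrum _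
  refine ⟨?_, ?_, ?_⟩
  · set c : NNReal := hfin.toFinset.sup (fun μ => ‖μ‖₊) with hc_def
    have hc : c < 1 := by
      rw [hc_def]
      apply Finset.sup_lt_iff (by norm_num : (0:NNReal) < 1) |>.mpr
      intro μ hμ
      have h := key μ (hfin.mem_toFinset.mp hμ)
      rw [← NNReal.coe_lt_coe]
      simpa using h
    have hle : spectralRadius ℂ (E (t + T) t ξ) ≤ (c : ENNReal) := by
      unfold spectralRadius
      apply iSup₂_le
      intro μ hμ
      exact_mod_cast ENNReal.coe_le_coe.mpr (Finset.le_sup (hfin.mem_toFinset.mpr hμ))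
    calc spectralRadius ℂ (E (t + T) t ξ) ≤ (c : ENNReal) := hle
      _ < 1 := by exact_mod_cast hc
  · intro h
    have := key 1 h
    simp at this
  · intro h
    have := key (-1) h
    simp at this
end
end

section
/- (Lemma 2, small frequencies) Let m ≡ m₀ with m₀ > 0 constant, and fix N > 0. Then there exists k ∈ ℕ such that sup over all t ∈ [0,T] and all ξ ∈ ℝⁿ with |ξ| ≤ N of ‖M₀(t,ξ)^k‖ is strictly less than 1. -/
noncomputable section
open MeasureTheory Matrix Complex
open scoped Matrix.Norms.L2Operator

section Aux
-- component extraction CLM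

def compCLM (v : Fin 2 → ℂ) (i : Fin 2) : Matrix (Fin 2) (Fin 2) ℂ →L[ℝ] ℂ :=
  LinearMap.toContinuousLinearMap
    { toFun := fun M => ∑ j, M i j * v j
      map_add' := by intro M N; simp [Matrix.add_apply, add_mul, Finset.sum_add_distrib]
      map_smul' := by
        intro r M
        simp only [Matrix.smul_apply, RingHom.id_apply, Complex.real_smul, Finset.mul_sum]
        exact Finset.sum_congr rfl fun j _ => by ring }

lemma compCLM_apply (v : Fin 2 → ℂ) (i : Fin 2) (M : Matrix (Fin 2) (Fin 2) ℂ) :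
    compCLM v i M = (M *ᵥ v) i := by
  simp [compCLM, Matrix.mulVec, dotProduct]


variable {n : ℕ}


lemma hasDerivAt_comp_clm {E : ℝ → ℝ → EuclideanSpace ℝ (Fin n) → Matrix (Fin 2) (Fin 2) ℂ}
    {b : ℝ → ℝ} {m₀ : ℝ} (hE : IsFundamentalSolution b m₀ E)
    (t : ℝ) (ξ : EuclideanSpace ℝ (Fin n)) (v : Fin 2 → ℂ) (i : Fin 2) (τ : ℝ) :
    HasDerivAt (fun σ => (E σ t ξ *ᵥ v) i)
      (compCLM v i (Complex.I • (sysMatrix b m₀ τ ξ * E τ t ξ))) τ := by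
  have h := ((compCLM v i).hasFDerivAt.comp_hasDerivAt τ (by exact hE.1 t ξ τ))
  simpa [compCLM_apply, Function.comp_def] using h

lemma deriv_comp0 {E : ℝ → ℝ → EuclideanSpace ℝ (Fin n) → Matrix (Fin 2) (Fin 2) ℂ}
    {b : ℝ → ℝ} {m₀ : ℝ} (hE : IsFundamentalSolution b m₀ E)
    (t : ℝ) (ξ : EuclideanSpace ℝ (Fin n)) (v : Fin 2 → ℂ) (τ : ℝ) :
    HasDerivAt (fun σ => (E σ t ξ *ᵥ v) 0)
      (Complex.I * ((Real.sqrt (‖ξ‖ ^ 2 + m₀ ^ 2) : ℂ) * (E τ t ξ *ᵥ v) 1)) τ := by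
  have h := hasDerivAt_comp_clm hE t ξ v 0 τ
  convert h using 1
  simp [compCLM, sysMatrix, Matrix.mul_apply, Matrix.mulVec, Matrix.vecMul, dotProduct,
    Fin.sum_univ_two, Matrix.smul_apply]
  ring

lemma deriv_comp1 {E : ℝ → ℝ → EuclideanSpace ℝ (Fin n) → Matrix (Fin 2) (Fin 2) ℂ}
    {b : ℝ → ℝ} {m₀ : ℝ} (hE : IsFundamentalSolution b m₀ E)
    (t : ℝ) (ξ : EuclideanSpace ℝ (Fin n)) (v : Fin 2 → ℂ) (τ : ℝ) :
    HasDerivAt (fun σ => (E σ t ξ *ᵥ v) 1)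
      (Complex.I * (Real.sqrt (‖ξ‖ ^ 2 + m₀ ^ 2) : ℂ) * (E τ t ξ *ᵥ v) 0
        - 2 * (b τ : ℂ) * (E τ t ξ *ᵥ v) 1) τ := by
  have h := hasDerivAt_comp_clm hE t ξ v 1 τ
  convert h using 1
  simp [compCLM, sysMatrix, Matrix.mul_apply, Matrix.mulVec, Matrix.vecMul, dotProduct,
    Fin.sum_univ_two, Matrix.smul_apply]
  ring_nf
  simp [Complex.I_sq]
  ring



lemma hasDerivAt_re' {g : ℝ → ℂ} {g' : ℂ} {τ : ℝ} (h : HasDerivAt g g' τ) :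
    HasDerivAt (fun σ => (g σ).re) g'.re τ := by
  have := Complex.reCLM.hasFDerivAt.comp_hasDerivAt τ h
  simp [Function.comp_def] at this
  exact this

lemma hasDerivAt_im' {g : ℝ → ℂ} {g' : ℂ} {τ : ℝ} (h : HasDerivAt g g' τ) :
    HasDerivAt (fun σ => (g σ).im) g'.im τ := by
  have := Complex.imCLM.hasFDerivAt.comp_hasDerivAt τ h
  simp [Function.comp_def] at this
  exact this

lemma normSq_hasDerivAt {g : ℝ → ℂ} {g' : ℂ} {τ : ℝ} (h : HasDerivAt g g' τ) :
    HasDerivAt (fun σ => normSq (g σ)) (2 * ((g τ).re * g'.re + (g τ).im * g'.im)) τ := by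
  have H := ((hasDerivAt_re' h).mul (hasDerivAt_re' h)).add
    ((hasDerivAt_im' h).mul (hasDerivAt_im' h))
  have heq : ((fun σ => (g σ).re) * (fun σ => (g σ).re) + (fun σ => (g σ).im) * (fun σ => (g σ).im))
      = fun σ => normSq (g σ) := by
    funext σ; simp [Complex.normSq_apply]
  rw [heq] at H
  have e : 2 * ((g τ).re * g'.re + (g τ).im * g'.im)
      = g'.re * (g τ).re + (g τ).re * g'.re + (g'.im * (g τ).im + (g τ).im * g'.im) := by ring
  rw [e]; exact H

lemma energy_deriv {u₀ u₁ : ℝ → ℂ} {γ : ℝ} {b : ℝ → ℝ} {τ : ℝ}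
    (h0 : HasDerivAt u₀ (Complex.I * ((γ : ℂ) * u₁ τ)) τ)
    (h1 : HasDerivAt u₁ (Complex.I * (γ : ℂ) * u₀ τ - 2 * (b τ : ℂ) * u₁ τ) τ) :
    HasDerivAt (fun σ => normSq (u₀ σ) + normSq (u₁ σ))
      (-4 * b τ * normSq (u₁ τ)) τ := by
  have H := (normSq_hasDerivAt h0).add (normSq_hasDerivAt h1)
  have e : -4 * b τ * normSq (u₁ τ)
      = 2 * ((u₀ τ).re * (Complex.I * ((γ : ℂ) * u₁ τ)).re
          + (u₀ τ).im * (Complex.I * ((γ : ℂ) * u₁ τ)).im)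
        + 2 * ((u₁ τ).re * (Complex.I * (γ : ℂ) * u₀ τ - 2 * (b τ : ℂ) * u₁ τ).re
          + (u₁ τ).im * (Complex.I * (γ : ℂ) * u₀ τ - 2 * (b τ : ℂ) * u₁ τ).im) := by
    simp [Complex.normSq_apply, Complex.mul_re, Complex.mul_im, Complex.sub_re, Complex.sub_im]
    ring
  rw [e]; exact H

set_option maxHeartbeats 4000000 in
lemma key_estimate (b : ℝ → ℝ) (hb_cont : Continuous b) (hb_nonneg : ∀ τ, 0 ≤ b τ)
    (B : ℝ) (hB : ∀ τ, b τ ≤ B)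
    (γ m₀ G : ℝ) (hm₀ : 0 < m₀) (hγ1 : m₀ ≤ γ) (hγ2 : γ ≤ G)
    (u₀ u₁ : ℝ → ℂ)
    (h0 : ∀ τ, HasDerivAt u₀ (Complex.I * ((γ : ℂ) * u₁ τ)) τ)
    (h1 : ∀ τ, HasDerivAt u₁ (Complex.I * (γ : ℂ) * u₀ τ - 2 * (b τ : ℂ) * u₁ τ) τ)
    (t T a δ b₀ ε : ℝ) (hδ : 0 < δ) (hb₀ : 0 < b₀) (hε : 0 < ε)
    (ha1 : t ≤ a) (ha2 : a + δ ≤ t + T)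
    (hbJ : ∀ σ ∈ Set.Icc a (a + δ), b₀ ≤ b σ)
    (hnorm : normSq (u₀ t) + normSq (u₁ t) = 1)
    (hbig : 1 - ε < normSq (u₀ (t + T)) + normSq (u₁ (t + T))) :
    m₀ * δ * Real.sqrt (1 - ε - (ε / (4 * b₀ * δ)
        + 2 * (G + 2 * B) * (1 / (8 * b₀) + δ / 2) * Real.sqrt ε))
      ≤ 2 * Real.sqrt (ε / (4 * b₀ * δ)
          + 2 * (G + 2 * B) * (1 / (8 * b₀) + δ / 2) * Real.sqrt ε)
        + (G ^ 2 * δ + 2 * B) * (1 / (8 * b₀) + δ / 2) * Real.sqrt ε := by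
  have hγ0 : 0 < γ := lt_of_lt_of_le hm₀ hγ1
  have hG0 : 0 < G := lt_of_lt_of_le hγ0 hγ2
  have hB0 : 0 < B := lt_of_lt_of_le (lt_of_lt_of_le hb₀ (hbJ a ⟨le_refl a, by linarith⟩)) (hB a)
  set K : ℝ := 1 / (8 * b₀) + δ / 2 with hKdef
  have hK0 : 0 < K := by positivity
  set η : ℝ := ε / (4 * b₀ * δ) + 2 * (G + 2 * B) * K * Real.sqrt ε with hηdef
  have hr : 0 < Real.sqrt ε := Real.sqrt_pos.2 hε
  have hη0 : 0 < η := by positivity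
  set f : ℝ → ℝ := fun σ => normSq (u₀ σ) + normSq (u₁ σ) with hfdef
  have hcu₀ : Continuous u₀ := by
    rw [continuous_iff_continuousAt]; exact fun τ => (h0 τ).continuousAt
  have hcu₁ : Continuous u₁ := by
    rw [continuous_iff_continuousAt]; exact fun τ => (h1 τ).continuousAt
  have hn₁c : Continuous fun σ => normSq (u₁ σ) := Complex.continuous_normSq.comp hcu₁
  have hfc : Continuous f := (Complex.continuous_normSq.comp hcu₀).add hn₁c
  have hfd : ∀ τ, HasDerivAt f (-4 * b τ * normSq (u₁ τ)) τ :=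
    fun τ => energy_deriv (h0 τ) (h1 τ)
  have hmono : Antitone f := by
    apply antitone_of_deriv_nonpos (fun τ => (hfd τ).differentiableAt)
    intro τ
    rw [(hfd τ).deriv]
    have := hb_nonneg τ
    have := Complex.normSq_nonneg (u₁ τ)
    nlinarith
  have haδ : a ≤ a + δ := by linarith
  have htT : t ≤ t + T := by linarith
  have hft1 : f t = 1 := hnorm
  have hle1 : ∀ σ, t ≤ σ → f σ ≤ 1 := by
    intro σ h
    have := hmono h
    linarith
  -- Step A
  have hintegrandA : Continuous fun σ => -4 * b σ * normSq (u₁ σ) :=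
    ((continuous_const.mul hb_cont).mul hn₁c)
  have hintA : ∫ σ in t..(t + T), (-4 * b σ * normSq (u₁ σ)) = f (t + T) - f t :=
    intervalIntegral.integral_eq_sub_of_hasDerivAt (fun σ _ => hfd σ)
      (hintegrandA.intervalIntegrable _ _)
  have hA : ∫ σ in t..(t + T), 4 * b σ * normSq (u₁ σ) < ε := by
    have h2 : (fun σ => 4 * b σ * normSq (u₁ σ))
        = fun σ => -(-4 * b σ * normSq (u₁ σ)) := by funext σ; ring
    have hft : f t = 1 := hnorm
    have hfT : 1 - ε < f (t + T) := hbig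
    rw [h2, intervalIntegral.integral_neg, hintA, hft]
    linarith
  -- Step B
  obtain ⟨P, hPdef⟩ : ∃ P : ℝ, P = ∫ σ in a..(a + δ), normSq (u₁ σ) := ⟨_, rfl⟩
  have hint4b : IntervalIntegrable (fun σ => 4 * b σ * normSq (u₁ σ)) volume a (a + δ) :=
    ((continuous_const.mul hb_cont).mul hn₁c).intervalIntegrable _ _
  have hPnonneg : 0 ≤ P := hPdef ▸
    intervalIntegral.integral_nonneg haδ (fun σ _ => Complex.normSq_nonneg _)
  have hB1 : 4 * b₀ * P ≤ ∫ σ in a..(a + δ), 4 * b σ * normSq (u₁ σ) := by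
    have he : ∫ σ in a..(a + δ), 4 * b₀ * normSq (u₁ σ) = 4 * b₀ * P := by
      rw [hPdef, intervalIntegral.integral_const_mul]
    rw [← he]
    apply intervalIntegral.integral_mono_on haδ
      ((continuous_const.mul hn₁c).intervalIntegrable _ _) hint4b
    intro σ hσ
    have := hbJ σ hσ
    have := Complex.normSq_nonneg (u₁ σ)
    show 4 * b₀ * normSq (u₁ σ) ≤ 4 * b σ * normSq (u₁ σ)
    nlinarith
  have hB2 : (∫ σ in a..(a + δ), 4 * b σ * normSq (u₁ σ))
      ≤ ∫ σ in t..(t + T), 4 * b σ * normSq (u₁ σ) := by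
    apply intervalIntegral.integral_mono_interval ha1 haδ ha2
    · filter_upwards with σ
      have := hb_nonneg σ
      have := Complex.normSq_nonneg (u₁ σ)
      positivity
    · exact ((continuous_const.mul hb_cont).mul hn₁c).intervalIntegrable _ _
  have hPle : P ≤ ε / (4 * b₀) := by
    rw [le_div_iff₀ (by positivity)]
    nlinarith
  -- Step C
  obtain ⟨Q, hQdef⟩ : ∃ Q : ℝ, Q = ∫ σ in a..(a + δ), ‖u₁ σ‖ := ⟨_, rfl⟩
  have habsc : Continuous fun σ => ‖u₁ σ‖ := hcu₁.norm
  have hQnonneg : 0 ≤ Q := hQdef ▸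
    intervalIntegral.integral_nonneg haδ (fun σ _ => norm_nonneg _)
  have hC1 : Q ≤ P / (2 * Real.sqrt ε) + Real.sqrt ε * δ / 2 := by
    have hpt : ∀ σ ∈ Set.Icc a (a + δ),
        ‖u₁ σ‖ ≤ normSq (u₁ σ) * (1 / (2 * Real.sqrt ε)) + Real.sqrt ε / 2 := by
      intro σ _
      have h1' : ‖u₁ σ‖ ^ 2 = normSq (u₁ σ) := by
        rw [Complex.sq_norm]
      rw [← h1', ← sub_nonneg]
      have key : ‖u₁ σ‖ ^ 2 * (1 / (2 * Real.sqrt ε)) + Real.sqrt ε / 2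
            - ‖u₁ σ‖
          = (‖u₁ σ‖ - Real.sqrt ε) ^ 2 * (1 / (2 * Real.sqrt ε)) := by
        field_simp
        ring
      rw [key]
      positivity
    have hint : ∫ σ in a..(a + δ),
        (normSq (u₁ σ) * (1 / (2 * Real.sqrt ε)) + Real.sqrt ε / 2)
        = P / (2 * Real.sqrt ε) + Real.sqrt ε * δ / 2 := by
      rw [intervalIntegral.integral_add
        (show IntervalIntegrable (fun σ => normSq (u₁ σ) * (1 / (2 * Real.sqrt ε))) volume a (a + δ)
          from (hn₁c.mul continuous_const).intervalIntegrable _ _)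
        (intervalIntegrable_const),
        intervalIntegral.integral_mul_const, intervalIntegral.integral_const]
      rw [hPdef]
      simp only [smul_eq_mul]
      ring
    rw [hQdef, ← hint]
    exact intervalIntegral.integral_mono_on haδ (habsc.intervalIntegrable _ _)
      (((hn₁c.mul continuous_const).add continuous_const).intervalIntegrable _ _) hpt
  have hQle : Q ≤ Real.sqrt ε * K := by
    have hse : Real.sqrt ε * Real.sqrt ε = ε := Real.mul_self_sqrt hε.le
    have h1' : P / (2 * Real.sqrt ε) ≤ Real.sqrt ε / (8 * b₀) := by
      rw [div_le_div_iff₀ (by positivity) (by positivity)]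
      nlinarith [hPle]
    rw [hKdef]
    calc Q ≤ P / (2 * Real.sqrt ε) + Real.sqrt ε * δ / 2 := hC1
      _ ≤ Real.sqrt ε / (8 * b₀) + Real.sqrt ε * δ / 2 := by linarith
      _ = Real.sqrt ε * (1 / (8 * b₀) + δ / 2) := by ring
  -- Step D : minimum of normSq u₁ on J
  obtain ⟨σ₀, hσ₀J, hminOn⟩ := isCompact_Icc.exists_isMinOn (Set.nonempty_Icc.2 haδ)
    (hn₁c.continuousOn (s := Set.Icc a (a + δ)))
  have hmin : ∀ σ ∈ Set.Icc a (a + δ), normSq (u₁ σ₀) ≤ normSq (u₁ σ) := fun σ hσ => hminOn hσ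
  have hD : δ * normSq (u₁ σ₀) ≤ P := by
    have he : ∫ _σ in a..(a + δ), normSq (u₁ σ₀) = δ * normSq (u₁ σ₀) := by
      rw [intervalIntegral.integral_const, smul_eq_mul]
      ring
    rw [← he, hPdef]
    exact intervalIntegral.integral_mono_on haδ intervalIntegrable_const
      (hn₁c.intervalIntegrable _ _) hmin
  have hσ₀le : normSq (u₁ σ₀) ≤ ε / (4 * b₀ * δ) := by
    rw [le_div_iff₀ (by positivity)]
    have : 4 * b₀ * (δ * normSq (u₁ σ₀)) ≤ 4 * b₀ * P := by nlinarith
    nlinarith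
  have hcb : Continuous fun x => 2 * (b x : ℂ) * u₁ x :=
    (continuous_const.mul (Complex.continuous_ofReal.comp hb_cont)).mul hcu₁
  -- Step E : sup bound of `normSq (u₁ ·)` on J
  obtain ⟨D1, hD1def⟩ : ∃ D1 : ℝ → ℂ,
      D1 = fun σ => Complex.I * (γ : ℂ) * u₀ σ - 2 * (b σ : ℂ) * u₁ σ := ⟨_, rfl⟩
  have hD1c : Continuous D1 := by
    rw [hD1def]
    exact ((continuous_const.mul hcu₀)).sub hcb
  obtain ⟨g', hg'def⟩ : ∃ g' : ℝ → ℝ,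
      g' = fun σ => 2 * ((u₁ σ).re * (D1 σ).re + (u₁ σ).im * (D1 σ).im) := ⟨_, rfl⟩
  have hg'c : Continuous g' := by
    rw [hg'def]
    exact continuous_const.mul
      (((Complex.continuous_re.comp hcu₁).mul (Complex.continuous_re.comp hD1c)).add
        ((Complex.continuous_im.comp hcu₁).mul (Complex.continuous_im.comp hD1c)))
  have hgd : ∀ σ, HasDerivAt (fun x => normSq (u₁ x)) (g' σ) σ := by
    intro σ
    rw [hg'def, hD1def]
    exact normSq_hasDerivAt (h1 σ)
  have hnorm_sq : ∀ z : ℂ, ‖z‖ = Real.sqrt (normSq z) := by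
    intro z; rw [Complex.norm_def]
  have habs1 : ∀ σ, t ≤ σ → ‖u₁ σ‖ ≤ 1 := by
    intro σ hσ
    have h := hle1 σ hσ
    have h0' := Complex.normSq_nonneg (u₀ σ)
    have h2 : normSq (u₁ σ) ≤ 1 := by
      have : f σ = normSq (u₀ σ) + normSq (u₁ σ) := rfl
      linarith
    rw [hnorm_sq]
    calc Real.sqrt (normSq (u₁ σ)) ≤ Real.sqrt 1 := Real.sqrt_le_sqrt h2
      _ = 1 := Real.sqrt_one
  have habs0 : ∀ σ, t ≤ σ → ‖u₀ σ‖ ≤ 1 := by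
    intro σ hσ
    have h := hle1 σ hσ
    have h0' := Complex.normSq_nonneg (u₁ σ)
    have h2 : normSq (u₀ σ) ≤ 1 := by
      have : f σ = normSq (u₀ σ) + normSq (u₁ σ) := rfl
      linarith
    rw [hnorm_sq]
    calc Real.sqrt (normSq (u₀ σ)) ≤ Real.sqrt 1 := Real.sqrt_le_sqrt h2
      _ = 1 := Real.sqrt_one
  have hg'bound : ∀ σ, t ≤ σ → |g' σ| ≤ 2 * (G + 2 * B) * ‖u₁ σ‖ := by
    intro σ hσ
    have hD1b : ‖D1 σ‖ ≤ G + 2 * B := by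
      rw [hD1def]
      calc ‖Complex.I * (γ : ℂ) * u₀ σ - 2 * (b σ : ℂ) * u₁ σ‖
          ≤ ‖Complex.I * (γ : ℂ) * u₀ σ‖ + ‖2 * (b σ : ℂ) * u₁ σ‖ := norm_sub_le _ _
        _ = γ * ‖u₀ σ‖ + 2 * b σ * ‖u₁ σ‖ := by
            simp [norm_mul, Complex.norm_real, Real.norm_eq_abs,
              _root_.abs_of_pos hγ0, _root_.abs_of_nonneg (hb_nonneg σ)]
        _ ≤ G * 1 + 2 * B * 1 := by
            have := habs0 σ hσ
            have := habs1 σ hσ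
            have := hb_nonneg σ
            have := hB σ
            have := norm_nonneg (u₀ σ)
            have := norm_nonneg (u₁ σ)
            nlinarith
        _ = G + 2 * B := by ring
    have hre : (u₁ σ).re * (D1 σ).re + (u₁ σ).im * (D1 σ).im
        = ((starRingEnd ℂ) (u₁ σ) * D1 σ).re := by
      simp [Complex.mul_re]
    have hre2 : |((starRingEnd ℂ) (u₁ σ) * D1 σ).re| ≤ ‖u₁ σ‖ * ‖D1 σ‖ := by
      calc |((starRingEnd ℂ) (u₁ σ) * D1 σ).re| ≤ ‖(starRingEnd ℂ) (u₁ σ) * D1 σ‖ := by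
            exact Complex.abs_re_le_norm _
        _ = ‖u₁ σ‖ * ‖D1 σ‖ := by rw [norm_mul, RCLike.norm_conj]
    rw [hg'def]
    have := norm_nonneg (u₁ σ)
    calc |2 * ((u₁ σ).re * (D1 σ).re + (u₁ σ).im * (D1 σ).im)|
        = 2 * |((starRingEnd ℂ) (u₁ σ) * D1 σ).re| := by rw [abs_mul, hre]; norm_num
      _ ≤ 2 * (‖u₁ σ‖ * ‖D1 σ‖) := by linarith [hre2]
      _ ≤ 2 * (G + 2 * B) * ‖u₁ σ‖ := by nlinarith [norm_nonneg (D1 σ)]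
  have hEb : ∀ σ ∈ Set.Icc a (a + δ), normSq (u₁ σ) ≤ η := by
    intro σ hσ
    have hftc : ∫ x in σ₀..σ, g' x = normSq (u₁ σ) - normSq (u₁ σ₀) :=
      intervalIntegral.integral_eq_sub_of_hasDerivAt (fun x _ => hgd x)
        (hg'c.intervalIntegrable _ _)
    have habsint : |∫ x in σ₀..σ, g' x| ≤ ∫ x in a..(a + δ), |g' x| := by
      have hnn : (0 : ℝ → ℝ) ≤ᵐ[volume.restrict (Set.Ioc a (a + δ))] fun x => |g' x| := by
        filter_upwards with x
        exact abs_nonneg _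
      rcases le_total σ₀ σ with h | h
      · calc |∫ x in σ₀..σ, g' x| ≤ ∫ x in σ₀..σ, |g' x| :=
              intervalIntegral.abs_integral_le_integral_abs h
          _ ≤ ∫ x in a..(a + δ), |g' x| :=
              intervalIntegral.integral_mono_interval hσ₀J.1 h hσ.2 hnn
                (hg'c.abs.intervalIntegrable _ _)
      · rw [intervalIntegral.integral_symm, abs_neg]
        calc |∫ x in σ..σ₀, g' x| ≤ ∫ x in σ..σ₀, |g' x| :=
              intervalIntegral.abs_integral_le_integral_abs h
          _ ≤ ∫ x in a..(a + δ), |g' x| :=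
              intervalIntegral.integral_mono_interval hσ.1 h hσ₀J.2 hnn
                (hg'c.abs.intervalIntegrable _ _)
    have hintb : ∫ x in a..(a + δ), |g' x| ≤ 2 * (G + 2 * B) * Q := by
      have he : ∫ x in a..(a + δ), 2 * (G + 2 * B) * ‖u₁ x‖ = 2 * (G + 2 * B) * Q := by
        rw [hQdef, intervalIntegral.integral_const_mul]
      rw [← he]
      apply intervalIntegral.integral_mono_on haδ (hg'c.abs.intervalIntegrable _ _)
        ((continuous_const.mul habsc).intervalIntegrable _ _)
      intro x hx
      exact hg'bound x (le_trans ha1 hx.1)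
    have hchain : normSq (u₁ σ) ≤ normSq (u₁ σ₀) + 2 * (G + 2 * B) * Q := by
      have h1'' := le_abs_self (∫ x in σ₀..σ, g' x)
      linarith [hftc ▸ h1'', habsint, hintb]
    have hQK : 2 * (G + 2 * B) * Q ≤ 2 * (G + 2 * B) * (Real.sqrt ε * K) := by
      have hpos : (0:ℝ) ≤ 2 * (G + 2 * B) := by positivity
      exact mul_le_mul_of_nonneg_left hQle hpos
    rw [hηdef]
    have := hσ₀le
    nlinarith
  -- Step F : lower bound on ‖u₀ a‖
  have hfge : ∀ σ ∈ Set.Icc a (a + δ), f (t + T) ≤ f σ := by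
    intro σ hσ
    exact hmono (by linarith [hσ.2] : σ ≤ t + T)
  have hu₀a : Real.sqrt (1 - ε - η) ≤ ‖u₀ a‖ := by
    have haJ : a ∈ Set.Icc a (a + δ) := ⟨le_refl a, by linarith⟩
    have hfa := hfge a haJ
    have hEa := hEb a haJ
    have hfTbig : 1 - ε < f (t + T) := hbig
    have hfa' : f a = normSq (u₀ a) + normSq (u₁ a) := rfl
    have hlow : 1 - ε - η ≤ normSq (u₀ a) := by linarith
    rw [hnorm_sq]
    exact Real.sqrt_le_sqrt hlow
  have hu₁J : ∀ σ ∈ Set.Icc a (a + δ), ‖u₁ σ‖ ≤ Real.sqrt η := by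
    intro σ hσ
    rw [hnorm_sq]
    exact Real.sqrt_le_sqrt (hEb σ hσ)
  -- Step G : variation bound on u₀
  have hvar : ∀ σ ∈ Set.Icc a (a + δ), ‖u₀ σ - u₀ a‖ ≤ G * Q := by
    intro σ hσ
    have hftc : ∫ x in a..σ, (Complex.I * ((γ : ℂ) * u₁ x)) = u₀ σ - u₀ a :=
      intervalIntegral.integral_eq_sub_of_hasDerivAt (fun x _ => h0 x)
        ((continuous_const.mul (continuous_const.mul hcu₁)).intervalIntegrable _ _)
    rw [← hftc]
    calc ‖∫ x in a..σ, Complex.I * ((γ : ℂ) * u₁ x)‖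
        ≤ ∫ x in a..σ, ‖Complex.I * ((γ : ℂ) * u₁ x)‖ :=
          intervalIntegral.norm_integral_le_integral_norm hσ.1
      _ = ∫ x in a..σ, γ * ‖u₁ x‖ := by
          congr 1
          funext x
          simp [norm_mul, Complex.norm_real, Real.norm_eq_abs, _root_.abs_of_pos hγ0]
      _ ≤ ∫ x in a..(a + δ), γ * ‖u₁ x‖ := by
          apply intervalIntegral.integral_mono_interval (le_refl a) hσ.1 hσ.2
          · filter_upwards with x
            positivity
          · exact (continuous_const.mul habsc).intervalIntegrable _ _
      _ = γ * Q := by rw [hQdef, intervalIntegral.integral_const_mul]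
      _ ≤ G * Q := mul_le_mul_of_nonneg_right hγ2 hQnonneg
  -- Step H : the final balance
  have hftc1 : ∫ x in a..(a + δ), D1 x = u₁ (a + δ) - u₁ a := by
    apply intervalIntegral.integral_eq_sub_of_hasDerivAt
    · intro x _
      rw [hD1def]
      exact h1 x
    · exact hD1c.intervalIntegrable _ _
  have hint_u₀ : (∫ x in a..(a + δ), u₀ x)
      = (∫ x in a..(a + δ), (u₀ x - u₀ a)) + (δ : ℂ) * u₀ a := by
    rw [intervalIntegral.integral_sub (hcu₀.intervalIntegrable _ _) intervalIntegrable_const,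
      intervalIntegral.integral_const]
    simp [Complex.real_smul]
  have hsplit : ∫ x in a..(a + δ), D1 x
      = Complex.I * (γ : ℂ) * ((δ : ℂ) * u₀ a)
        + Complex.I * (γ : ℂ) * (∫ x in a..(a + δ), (u₀ x - u₀ a))
        - ∫ x in a..(a + δ), 2 * (b x : ℂ) * u₁ x := by
    rw [hD1def]
    beta_reduce
    rw [intervalIntegral.integral_sub (show
      IntervalIntegrable (fun x => Complex.I * (γ : ℂ) * u₀ x) volume a (a + δ)
      from (continuous_const.mul hcu₀).intervalIntegrable _ _)
      (hcb.intervalIntegrable _ _)]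
    rw [intervalIntegral.integral_const_mul, hint_u₀]
    ring
  have hkey : Complex.I * (γ : ℂ) * ((δ : ℂ) * u₀ a)
      = (u₁ (a + δ) - u₁ a)
        - Complex.I * (γ : ℂ) * (∫ x in a..(a + δ), (u₀ x - u₀ a))
        + ∫ x in a..(a + δ), 2 * (b x : ℂ) * u₁ x := by
    rw [← hftc1, hsplit]
    ring
  have hLHS : ‖Complex.I * (γ : ℂ) * ((δ : ℂ) * u₀ a)‖ = γ * (δ * ‖u₀ a‖) := by
    simp [norm_mul, Complex.norm_real, Real.norm_eq_abs, _root_.abs_of_pos hγ0, _root_.abs_of_pos hδ]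
  have hb1' : ‖u₁ (a + δ) - u₁ a‖ ≤ 2 * Real.sqrt η := by
    have h1'' := hu₁J a ⟨le_refl a, by linarith⟩
    have h2'' := hu₁J (a + δ) ⟨by linarith, le_refl _⟩
    calc ‖u₁ (a + δ) - u₁ a‖ ≤ ‖u₁ (a + δ)‖ + ‖u₁ a‖ := norm_sub_le _ _
      _ ≤ 2 * Real.sqrt η := by linarith
  have hb2' : ‖∫ x in a..(a + δ), (u₀ x - u₀ a)‖ ≤ δ * (G * Q) := by
    calc ‖∫ x in a..(a + δ), (u₀ x - u₀ a)‖ ≤ ∫ x in a..(a + δ), ‖u₀ x - u₀ a‖ :=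
          intervalIntegral.norm_integral_le_integral_norm haδ
      _ ≤ ∫ _x in a..(a + δ), G * Q := by
          apply intervalIntegral.integral_mono_on haδ
            ((hcu₀.sub continuous_const).norm.intervalIntegrable _ _)
            intervalIntegrable_const
          exact hvar
      _ = δ * (G * Q) := by
          rw [intervalIntegral.integral_const, smul_eq_mul]
          ring
  have hb3' : ‖∫ x in a..(a + δ), 2 * (b x : ℂ) * u₁ x‖ ≤ 2 * B * Q := by
    calc ‖∫ x in a..(a + δ), 2 * (b x : ℂ) * u₁ x‖
        ≤ ∫ x in a..(a + δ), ‖2 * (b x : ℂ) * u₁ x‖ :=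
          intervalIntegral.norm_integral_le_integral_norm haδ
      _ ≤ ∫ x in a..(a + δ), 2 * B * ‖u₁ x‖ := by
          apply intervalIntegral.integral_mono_on haδ
            (hcb.norm.intervalIntegrable _ _)
            ((continuous_const.mul habsc).intervalIntegrable _ _)
          intro x _
          have hbx := hb_nonneg x
          have hBx := hB x
          have hnn := norm_nonneg (u₁ x)
          calc ‖2 * (b x : ℂ) * u₁ x‖ = 2 * b x * ‖u₁ x‖ := by
                simp [norm_mul, Complex.norm_real, Real.norm_eq_abs, _root_.abs_of_nonneg hbx]
            _ ≤ 2 * B * ‖u₁ x‖ := by nlinarith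
      _ = 2 * B * Q := by rw [hQdef, intervalIntegral.integral_const_mul]
  have hbalance : γ * (δ * ‖u₀ a‖)
      ≤ 2 * Real.sqrt η + γ * (δ * (G * Q)) + 2 * B * Q := by
    rw [← hLHS, hkey]
    calc ‖(u₁ (a + δ) - u₁ a)
          - Complex.I * (γ : ℂ) * (∫ x in a..(a + δ), (u₀ x - u₀ a))
          + ∫ x in a..(a + δ), 2 * (b x : ℂ) * u₁ x‖
        ≤ ‖(u₁ (a + δ) - u₁ a)
            - Complex.I * (γ : ℂ) * (∫ x in a..(a + δ), (u₀ x - u₀ a))‖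
          + ‖∫ x in a..(a + δ), 2 * (b x : ℂ) * u₁ x‖ := norm_add_le _ _
      _ ≤ ‖u₁ (a + δ) - u₁ a‖
          + ‖Complex.I * (γ : ℂ) * (∫ x in a..(a + δ), (u₀ x - u₀ a))‖
          + ‖∫ x in a..(a + δ), 2 * (b x : ℂ) * u₁ x‖ := by
          linarith [norm_sub_le (u₁ (a + δ) - u₁ a)
            (Complex.I * (γ : ℂ) * (∫ x in a..(a + δ), (u₀ x - u₀ a)))]
      _ ≤ 2 * Real.sqrt η + γ * (δ * (G * Q)) + 2 * B * Q := by
          have hn : ‖Complex.I * (γ : ℂ) * (∫ x in a..(a + δ), (u₀ x - u₀ a))‖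
              = γ * ‖∫ x in a..(a + δ), (u₀ x - u₀ a)‖ := by
            simp [norm_mul, Complex.norm_real, Real.norm_eq_abs, _root_.abs_of_pos hγ0]
          rw [hn]
          have := mul_le_mul_of_nonneg_left hb2' (le_of_lt hγ0)
          linarith [hb1', hb3']
  -- conclude
  have hfinal1 : m₀ * δ * Real.sqrt (1 - ε - η) ≤ γ * (δ * ‖u₀ a‖) := by
    have hs := Real.sqrt_nonneg (1 - ε - η)
    have e1 : m₀ * δ ≤ γ * δ := mul_le_mul_of_nonneg_right hγ1 hδ.le
    have e2 : m₀ * δ * Real.sqrt (1 - ε - η) ≤ γ * δ * Real.sqrt (1 - ε - η) :=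
      mul_le_mul_of_nonneg_right e1 hs
    have e3 : γ * δ * Real.sqrt (1 - ε - η) ≤ γ * δ * ‖u₀ a‖ :=
      mul_le_mul_of_nonneg_left hu₀a (by positivity)
    have e4 : γ * δ * ‖u₀ a‖ = γ * (δ * ‖u₀ a‖) := by ring
    linarith
  have hfinal2 : γ * (δ * (G * Q)) + 2 * B * Q ≤ (G ^ 2 * δ + 2 * B) * K * Real.sqrt ε := by
    have e5 : γ * (δ * (G * Q)) ≤ G * (δ * (G * Q)) := by
      apply mul_le_mul_of_nonneg_right hγ2
      positivity
    have e6 : G * (δ * (G * Q)) + 2 * B * Q = (G ^ 2 * δ + 2 * B) * Q := by ring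
    have e7 : (G ^ 2 * δ + 2 * B) * Q ≤ (G ^ 2 * δ + 2 * B) * (Real.sqrt ε * K) := by
      apply mul_le_mul_of_nonneg_left hQle
      positivity
    have e8 : (G ^ 2 * δ + 2 * B) * (Real.sqrt ε * K) = (G ^ 2 * δ + 2 * B) * K * Real.sqrt ε := by
      ring
    linarith
  linarith [hbalance, hfinal1, hfinal2]



lemma exists_good_eps (m₀ δ b₀ B G : ℝ) (hm₀ : 0 < m₀) (hδ : 0 < δ) (hb₀ : 0 < b₀)
    (hB : 0 < B) (hG : 0 < G) :
    ∃ ε : ℝ, 0 < ε ∧ ε ≤ 1/4 ∧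
      (ε / (4*b₀*δ) + 2*(G+2*B)*(1/(8*b₀)+δ/2)*Real.sqrt ε) ≤ 1/4 ∧
      2 * Real.sqrt (ε/(4*b₀*δ) + 2*(G+2*B)*(1/(8*b₀)+δ/2)*Real.sqrt ε)
        + (G^2*δ+2*B)*(1/(8*b₀)+δ/2)*Real.sqrt ε < m₀*δ*(1/2) := by
  set K : ℝ := 1/(8*b₀)+δ/2 with hK
  set φ : ℝ → ℝ := fun ε => ε/(4*b₀*δ) + 2*(G+2*B)*K*Real.sqrt ε with hφdef
  set ψ : ℝ → ℝ := fun ε => 2*Real.sqrt (φ ε) + (G^2*δ+2*B)*K*Real.sqrt ε with hψdef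
  have hφc : Continuous φ := by
    apply Continuous.add
    · exact continuous_id.div_const _
    · exact continuous_const.mul Real.continuous_sqrt
  have hψc : Continuous ψ :=
    (continuous_const.mul (Real.continuous_sqrt.comp hφc)).add
      (continuous_const.mul Real.continuous_sqrt)
  have hφ0 : φ 0 = 0 := by simp [hφdef]
  have hψ0 : ψ 0 = 0 := by simp [hψdef, hφ0]
  have ht1 : Filter.Tendsto ψ (nhds 0) (nhds 0) := by
    have := hψc.continuousAt (x := 0)
    rwa [ContinuousAt, hψ0] at this
  have ht2 : Filter.Tendsto φ (nhds 0) (nhds 0) := by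
    have := hφc.continuousAt (x := 0)
    rwa [ContinuousAt, hφ0] at this
  have h1 : ∀ᶠ ε in nhds (0:ℝ), ψ ε < m₀*δ*(1/2) :=
    ht1.eventually_lt_const (by positivity)
  have h2 : ∀ᶠ ε in nhds (0:ℝ), φ ε < 1/4 :=
    ht2.eventually_lt_const (by norm_num)
  have h3 : ∀ᶠ ε in nhds (0:ℝ), ε < 1/4 :=
    Filter.tendsto_id.eventually_lt_const (by norm_num)
  have hall := ((h1.and h2).and h3).filter_mono
    (nhdsWithin_le_nhds (s := Set.Ioi (0:ℝ)))
  obtain ⟨ε, ⟨⟨hψε, hφε⟩, hε14⟩, hεpos⟩ :=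
    (hall.and eventually_mem_nhdsWithin).exists
  exact ⟨ε, hεpos, hε14.le, hφε.le, hψε⟩

lemma exists_interval (b : ℝ → ℝ) (T t₀ δ b₀ : ℝ)
    (hper : Function.Periodic b T) (hδ : 0 < δ) (hδT : 2*δ ≤ T)
    (ht₀ : t₀ ∈ Set.Icc 0 T)
    (hJ : ∀ σ ∈ Set.Icc (t₀-δ) (t₀+δ), b₀ ≤ b σ)
    (t : ℝ) (ht : t ∈ Set.Icc 0 T) :
    ∃ a, t ≤ a ∧ a + δ ≤ t + T ∧ ∀ σ ∈ Set.Icc a (a+δ), b₀ ≤ b σ := by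
  obtain ⟨ht0, htT⟩ := ht
  obtain ⟨h00, h0T⟩ := ht₀
  have hshift : ∀ σ, b (σ - T) = b σ := by
    intro σ
    have := hper (σ - T)
    simpa using this.symm
  rcases le_total t t₀ with hc | hc
  · rcases le_total (t₀ + δ) (t + T) with hd | hd
    · exact ⟨t₀, hc, by linarith, fun σ hσ => hJ σ ⟨by linarith [hσ.1], hσ.2⟩⟩
    · exact ⟨t₀ - δ, by linarith, by linarith,
        fun σ hσ => hJ σ ⟨hσ.1, by linarith [hσ.2]⟩⟩
  · rcases le_total (t₀ + δ) t with hd | hd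
    · refine ⟨t₀ + T, by linarith, by linarith, ?_⟩
      intro σ hσ
      have h := hJ (σ - T) ⟨by linarith [hσ.1], by linarith [hσ.2]⟩
      rw [hshift σ] at h
      exact h
    · refine ⟨t₀ + T - δ, by linarith, by linarith, ?_⟩
      intro σ hσ
      have h := hJ (σ - T) ⟨by linarith [hσ.1], by linarith [hσ.2]⟩
      rw [hshift σ] at h
      exact h

lemma opnorm_le_of_quadratic (M : Matrix (Fin 2) (Fin 2) ℂ) (c : ℝ) (hc : 0 ≤ c)
    (h : ∀ v : Fin 2 → ℂ, normSq ((M *ᵥ v) 0) + normSq ((M *ᵥ v) 1)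
      ≤ c^2 * (normSq (v 0) + normSq (v 1))) : ‖M‖ ≤ c := by
  rw [Matrix.l2_opNorm_def]
  apply ContinuousLinearMap.opNorm_le_bound _ hc
  intro x
  set v : Fin 2 → ℂ := (WithLp.equiv 2 (Fin 2 → ℂ)) x with hv
  have hval : ((Matrix.toEuclideanLin.trans LinearMap.toContinuousLinearMap) M) x
      = (WithLp.equiv 2 (Fin 2 → ℂ)).symm (M *ᵥ v) := rfl
  rw [hval]
  have hsq : ∀ z : ℂ, ‖z‖ ^ 2 = normSq z := by
    intro z; rw [Complex.sq_norm]
  have hn1 : ‖(WithLp.equiv 2 (Fin 2 → ℂ)).symm (M *ᵥ v)‖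
      = Real.sqrt (normSq ((M *ᵥ v) 0) + normSq ((M *ᵥ v) 1)) := by
    rw [EuclideanSpace.norm_eq]
    congr 1
    rw [Fin.sum_univ_two]
    simp [Complex.sq_norm]
  have hn2 : ‖x‖ = Real.sqrt (normSq (v 0) + normSq (v 1)) := by
    rw [EuclideanSpace.norm_eq]
    congr 1
    rw [Fin.sum_univ_two]
    simp [Complex.sq_norm]
    rfl
  rw [hn1, hn2]
  have hS : (0:ℝ) ≤ normSq (v 0) + normSq (v 1) := by
    have := Complex.normSq_nonneg (v 0); have := Complex.normSq_nonneg (v 1); linarith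
  have he : c * Real.sqrt (normSq (v 0) + normSq (v 1))
      = Real.sqrt (c^2 * (normSq (v 0) + normSq (v 1))) := by
    rw [Real.sqrt_mul (by positivity), Real.sqrt_sq hc]
  rw [he]
  exact Real.sqrt_le_sqrt (h v)

end Aux

/-- Lemma 2 (small frequencies, constant mass `m₀ > 0`): for any fixed `N > 0`
there is a `k ∈ ℕ` with `sup_{t ∈ [0,T], |ξ| ≤ N} ‖M₀(t,ξ)^k‖ < 1`, where
`M₀(t,ξ) = E₀(t+T,t,ξ)`. -/


theorem monodromy_power_contraction_small_frequencies
    {n : ℕ} (T : ℝ) (hT : 0 < T)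
    (b : ℝ → ℝ) (hb_cont : Continuous b) (hb_nonneg : ∀ t, 0 ≤ b t)
    (hb_per : Function.Periodic b T) (hb_ne : ∃ t, b t ≠ 0)
    (m₀ : ℝ) (hm₀ : 0 < m₀) (N : ℝ) (hN : 0 < N)
    (E : ℝ → ℝ → EuclideanSpace ℝ (Fin n) → Matrix (Fin 2) (Fin 2) ℂ)
    (hE : IsFundamentalSolution b m₀ E) :
    ∃ k : ℕ, ∃ c : ℝ, c < 1 ∧
      ∀ t ∈ Set.Icc (0 : ℝ) T, ∀ ξ : EuclideanSpace ℝ (Fin n), ‖ξ‖ ≤ N →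
        ‖(E (t + T) t ξ) ^ k‖ ≤ c := by
    -- global bound on b
  obtain ⟨sB, hsBmem, hsBmax⟩ := isCompact_Icc.exists_isMaxOn
    (Set.nonempty_Icc.2 hT.le) hb_cont.continuousOn
  obtain ⟨B, hBdef⟩ : ∃ B : ℝ, B = b sB := ⟨_, rfl⟩
  have hBb : ∀ τ, b τ ≤ B := by
    intro τ
    obtain ⟨y, hy, hxy⟩ := hb_per.exists_mem_Ico₀ hT τ
    rw [hxy, hBdef]
    exact hsBmax ⟨hy.1, hy.2.le⟩
  -- a point where b is positive, inside [0,T)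
  obtain ⟨s, hs⟩ := hb_ne
  have hbs : 0 < b s := lt_of_le_of_ne (hb_nonneg s) (Ne.symm hs)
  obtain ⟨t₀, ht₀mem, ht₀eq⟩ := hb_per.exists_mem_Ico₀ hT s
  have hbt₀ : 0 < b t₀ := ht₀eq ▸ hbs
  obtain ⟨b₀, hb₀def⟩ : ∃ b₀ : ℝ, b₀ = b t₀ / 2 := ⟨_, rfl⟩
  have hb₀ : 0 < b₀ := by rw [hb₀def]; positivity
  -- a neighbourhood where b ≥ b₀
  have hopen : IsOpen {x : ℝ | b₀ < b x} := isOpen_lt continuous_const hb_cont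
  have ht₀in : t₀ ∈ {x : ℝ | b₀ < b x} := by
    simp only [Set.mem_setOf_eq, hb₀def]
    linarith
  obtain ⟨r, hr0, hball⟩ := Metric.isOpen_iff.1 hopen t₀ ht₀in
  obtain ⟨δ, hδdef⟩ : ∃ δ : ℝ, δ = min (r/2) (T/2) := ⟨_, rfl⟩
  have hδ : 0 < δ := by
    rw [hδdef]
    exact lt_min (by positivity) (by positivity)
  have hδT : 2*δ ≤ T := by
    have := min_le_right (r/2) (T/2)
    rw [hδdef]
    linarith [min_le_right (r/2) (T/2)]
  have hJ : ∀ σ ∈ Set.Icc (t₀-δ) (t₀+δ), b₀ ≤ b σ := by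
    intro σ hσ
    have hmem : σ ∈ Metric.ball t₀ r := by
      rw [Metric.mem_ball, Real.dist_eq]
      have h1 := min_le_left (r/2) (T/2)
      have h2 : |σ - t₀| ≤ δ := abs_le.2 ⟨by linarith [hσ.1], by linarith [hσ.2]⟩
      rw [hδdef] at h2
      linarith
    exact (hball hmem).le
  have ht₀Icc : t₀ ∈ Set.Icc 0 T := ⟨ht₀mem.1, ht₀mem.2.le⟩
  obtain ⟨G, hGdef⟩ : ∃ G : ℝ, G = Real.sqrt (N^2 + m₀^2) := ⟨_, rfl⟩
  have hG0 : 0 < G := by rw [hGdef]; exact Real.sqrt_pos.2 (by positivity)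
  have hB0 : 0 < B := lt_of_lt_of_le hbt₀ (hBb t₀)
  obtain ⟨ε, hε0, hε14, hη14, hεlt⟩ := exists_good_eps m₀ δ b₀ B G hm₀ hδ hb₀ hB0 hG0
  have h1ε : (0:ℝ) ≤ 1 - ε := by linarith
  refine ⟨1, Real.sqrt (1 - ε), ?_, ?_⟩
  · have : Real.sqrt (1-ε) < Real.sqrt 1 := Real.sqrt_lt_sqrt h1ε (by linarith)
    simpa [Real.sqrt_one] using this
  intro t ht ξ hξ
  rw [pow_one]
  -- the frequency-dependent coefficient
  have hγ1 : m₀ ≤ Real.sqrt (‖ξ‖^2 + m₀^2) := by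
    rw [show m₀ = Real.sqrt (m₀^2) from (Real.sqrt_sq hm₀.le).symm]
    exact Real.sqrt_le_sqrt (by nlinarith [sq_nonneg ‖ξ‖, Real.sq_sqrt (sq_nonneg m₀)])
  have hγ2 : Real.sqrt (‖ξ‖^2 + m₀^2) ≤ G := by
    rw [hGdef]
    exact Real.sqrt_le_sqrt (by nlinarith [norm_nonneg ξ])
  obtain ⟨a, ha1, ha2, hbJ⟩ := exists_interval b T t₀ δ b₀ hb_per hδ hδT ht₀Icc hJ t ht
  -- half is below the square root of the remaining energy
  have hsqrt14 : Real.sqrt (1/4 : ℝ) = 1/2 := by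
    rw [show (1:ℝ)/4 = (1/2)^2 by norm_num, Real.sqrt_sq (by norm_num : (0:ℝ) ≤ 1/2)]
  -- the unit-vector estimate
  have hunit : ∀ w : Fin 2 → ℂ, normSq (w 0) + normSq (w 1) = 1 →
      normSq ((E (t+T) t ξ *ᵥ w) 0) + normSq ((E (t+T) t ξ *ᵥ w) 1) ≤ 1 - ε := by
    intro w hw
    by_contra hcon
    push_neg at hcon
    have hfnorm : normSq ((E t t ξ *ᵥ w) 0) + normSq ((E t t ξ *ᵥ w) 1) = 1 := by
      rw [hE.2 t ξ, Matrix.one_mulVec]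
      exact hw
    have hkey := key_estimate b hb_cont hb_nonneg B hBb
      (Real.sqrt (‖ξ‖^2 + m₀^2)) m₀ G hm₀ hγ1 hγ2
      (fun τ => (E τ t ξ *ᵥ w) 0) (fun τ => (E τ t ξ *ᵥ w) 1)
      (fun τ => deriv_comp0 hE t ξ w τ) (fun τ => deriv_comp1 hE t ξ w τ)
      t T a δ b₀ ε hδ hb₀ hε0 ha1 ha2 hbJ hfnorm hcon
    have harg : (1:ℝ)/4 ≤ 1 - ε - (ε / (4 * b₀ * δ)
        + 2 * (G + 2 * B) * (1 / (8 * b₀) + δ / 2) * Real.sqrt ε) := by linarith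
    have h14 : (1:ℝ)/2 ≤ Real.sqrt (1 - ε - (ε / (4 * b₀ * δ)
        + 2 * (G + 2 * B) * (1 / (8 * b₀) + δ / 2) * Real.sqrt ε)) := by
      calc (1:ℝ)/2 = Real.sqrt (1/4) := hsqrt14.symm
        _ ≤ _ := Real.sqrt_le_sqrt harg
    have hmul : m₀ * δ * (1/2) ≤ m₀ * δ * Real.sqrt (1 - ε - (ε / (4 * b₀ * δ)
        + 2 * (G + 2 * B) * (1 / (8 * b₀) + δ / 2) * Real.sqrt ε)) :=
      mul_le_mul_of_nonneg_left h14 (by positivity)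
    linarith
  -- deduce the operator norm bound
  apply opnorm_le_of_quadratic _ _ (Real.sqrt_nonneg _)
  intro v
  rw [Real.sq_sqrt h1ε]
  obtain ⟨S, hSdef⟩ : ∃ S : ℝ, S = normSq (v 0) + normSq (v 1) := ⟨_, rfl⟩
  rw [← hSdef]
  have hS0 : 0 ≤ S := by
    rw [hSdef]
    have := Complex.normSq_nonneg (v 0)
    have := Complex.normSq_nonneg (v 1)
    linarith
  rcases eq_or_lt_of_le hS0 with hS | hS
  · -- v = 0
    have hv0 : v 0 = 0 ∧ v 1 = 0 := by
      constructor <;>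
      · rw [← Complex.normSq_eq_zero]
        have h0 := Complex.normSq_nonneg (v 0)
        have h1 := Complex.normSq_nonneg (v 1)
        rw [hSdef] at hS
        linarith
    have hv : v = 0 := by
      funext i
      fin_cases i
      · exact hv0.1
      · exact hv0.2
    rw [hv, Matrix.mulVec_zero]
    simp [← hS]
  · -- rescale to a unit vector
    obtain ⟨ρ, hρdef⟩ : ∃ ρ : ℝ, ρ = (Real.sqrt S)⁻¹ := ⟨_, rfl⟩
    have hsS : 0 < Real.sqrt S := Real.sqrt_pos.2 hS
    have hρ0 : 0 < ρ := by rw [hρdef]; positivity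
    have hρ2 : ρ^2 * S = 1 := by
      rw [hρdef, show ((Real.sqrt S)⁻¹)^2 = ((Real.sqrt S)^2)⁻¹ by ring,
        Real.sq_sqrt hS0]
      field_simp
    obtain ⟨w, hwdef⟩ : ∃ w : Fin 2 → ℂ, w = (ρ : ℂ) • v := ⟨_, rfl⟩
    have hnsρ : normSq ((ρ : ℂ)) = ρ^2 := by
      rw [Complex.normSq_ofReal]; ring
    have hw : normSq (w 0) + normSq (w 1) = 1 := by
      rw [hwdef]
      simp only [Pi.smul_apply, smul_eq_mul, Complex.normSq_mul, hnsρ]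
      rw [show ρ^2 * normSq (v 0) + ρ^2 * normSq (v 1) = ρ^2 * S by rw [hSdef]; ring]
      exact hρ2
    have hmw := hunit w hw
    have hmv : ∀ i, (E (t+T) t ξ *ᵥ w) i = (ρ : ℂ) * (E (t+T) t ξ *ᵥ v) i := by
      intro i
      rw [hwdef, Matrix.mulVec_smul]
      simp
    rw [hmv 0, hmv 1, Complex.normSq_mul, Complex.normSq_mul, hnsρ] at hmw
    have hfact : ρ^2 * (normSq ((E (t+T) t ξ *ᵥ v) 0) + normSq ((E (t+T) t ξ *ᵥ v) 1))
        ≤ 1 - ε := by linarith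
    have := mul_le_mul_of_nonneg_left hfact (le_of_lt hS)
    calc normSq ((E (t+T) t ξ *ᵥ v) 0) + normSq ((E (t+T) t ξ *ᵥ v) 1)
        = S * (ρ^2 * (normSq ((E (t+T) t ξ *ᵥ v) 0) + normSq ((E (t+T) t ξ *ᵥ v) 1))) := by
          rw [show S * (ρ^2 * (normSq ((E (t+T) t ξ *ᵥ v) 0) + normSq ((E (t+T) t ξ *ᵥ v) 1)))
            = (ρ^2 * S) * (normSq ((E (t+T) t ξ *ᵥ v) 0) + normSq ((E (t+T) t ξ *ᵥ v) 1)) by ring,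
            hρ2, one_mul]
      _ ≤ S * (1 - ε) := this
      _ = (1 - ε) * S := by ring
end
end
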